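/- Let (T, 𝒯, P) be a probability space and κ a Markov kernel from T to ℝ with ∫_T ∫_ℝ x² dκ_t(x) dP(t) < ∞, and let ν* ∈ W₂(ℝ) be the Fréchet mean of κ, the measure whose quantile function satisfies F_{ν*}⁻(y) = ∫_T F_{κ_t}⁻(y) dP(t) for all y ∈ (0,1). If for P-almost every t ∈ T the cumulative distribution function F_{κ_t} is continuous, then F_{ν*} is continuous (equivalently, y ↦ ∫_T F_{κ_t}⁻(y) dP(t) is strictly increasing on (0,1)). -/

import Mathlib

open MeasureTheory

noncomputable section

/-- `ν` has a finite second moment. -/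
def FinSecondMoment (ν : Measure ℝ) : Prop :=
  ∫⁻ x, ENNReal.ofReal (x ^ 2) ∂ν < ⊤

/-- `ν ∈ W₂(ℝ)`: a Borel probability measure on `ℝ` with finite second moment. -/
def MemW2 (ν : Measure ℝ) : Prop :=
  IsProbabilityMeasure ν ∧ FinSecondMoment ν

/-- `π` is a coupling of `ν₁` and `ν₂`. -/
def IsCoupling (π : Measure (ℝ × ℝ)) (ν₁ ν₂ : Measure ℝ) : Prop :=
  IsProbabilityMeasure π ∧ π.map Prod.fst = ν₁ ∧ π.map Prod.snd = ν₂

/-- The quadratic Wasserstein distance. -/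
noncomputable def Wdist (ν₁ ν₂ : Measure ℝ) : ℝ :=
  Real.sqrt (⨅ π : {π : Measure (ℝ × ℝ) // IsCoupling π ν₁ ν₂},
      ∫⁻ p, ENNReal.ofReal ((p.1 - p.2) ^ 2) ∂(π.1)).toReal

/-- The cumulative distribution function of `ν`. -/
def cdf' (ν : Measure ℝ) (x : ℝ) : ℝ := (ν (Set.Iic x)).toReal

/-- The quantile function of `ν`. -/
noncomputable def quantile (ν : Measure ℝ) (y : ℝ) : ℝ := sInf {x : ℝ | y ≤ cdf' ν x}

/-- The logarithmic map at `μ`: `log_μ(ν) = F_ν⁻ ∘ F_μ - id`. -/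
noncomputable def logMap (μ ν : Measure ℝ) : ℝ → ℝ := fun x => quantile ν (cdf' μ x) - x

/-- The exponential map at `μ`: `exp_μ(v) = (id + v) # μ`. -/
noncomputable def expMap (μ : Measure ℝ) (v : ℝ → ℝ) : Measure ℝ := μ.map fun x => x + v x

/-- `μ` is atomless. -/
def Atomless (μ : Measure ℝ) : Prop := ∀ x : ℝ, μ {x} = 0

/-!
The quantile function of a measure with continuous cdf is strictly increasing on `(0,1)`, so
for `y₁ < y₂` the integrand `F_{κ_t}⁻(y₂) - F_{κ_t}⁻(y₁)` is a.e. positive; the second-moment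
bound makes it integrable (Chebyshev), hence `F_{ν*}⁻` is strictly increasing. Conversely, a
jump of a cdf at `x` from `F(x⁻)` to `F(x)` makes the quantile function constant equal to `x`
on `(F(x⁻), F(x))`.
-/

open Set Filter Topology ProbabilityTheory

section Quantile

variable {μ : Measure ℝ} {y : ℝ}

lemma bddBelow_setOf_le_cdf (hy : 0 < y) : BddBelow {x | y ≤ cdf μ x} := by
  obtain ⟨x₀, hx₀⟩ := eventually_atBot.1 ((tendsto_cdf_atBot μ).eventually_lt_const hy)
  exact ⟨x₀, fun x hx => not_lt.1 fun hlt => (hx₀ x hlt.le).not_ge hx⟩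

variable [IsProbabilityMeasure μ]

lemma cdf'_eq_cdf : cdf' μ = cdf μ := by
  funext x
  rw [cdf', cdf_eq_real, measureReal_def]

lemma quantile_eq_sInf : quantile μ y = sInf {x | y ≤ cdf μ x} := by
  rw [quantile, cdf'_eq_cdf]

lemma le_cdf_quantile (hy : y ∈ Ioo 0 1) : y ≤ cdf μ (quantile μ y) := by
  rw [quantile_eq_sInf]
  set q := sInf {x | y ≤ cdf μ x}
  obtain ⟨x₀, hx₀⟩ := ((tendsto_cdf_atTop μ).eventually_const_lt hy.2).exists
  have hright : ∀ x > q, y ≤ cdf μ x := fun x hx => by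
    obtain ⟨s, hs, hsx⟩ := exists_lt_of_csInf_lt ⟨x₀, hx₀.le⟩ hx
    exact hs.trans (monotone_cdf μ hsx.le)
  exact ge_of_tendsto (((cdf μ).right_continuous q).mono Ioi_subset_Ici_self)
    (eventually_nhdsWithin_of_forall hright)

lemma quantile_le_iff (hy : y ∈ Ioo 0 1) {x : ℝ} : quantile μ y ≤ x ↔ y ≤ cdf μ x :=
  ⟨fun h => (le_cdf_quantile hy).trans (monotone_cdf μ h), fun h => by
    rw [quantile_eq_sInf]
    exact csInf_le (bddBelow_setOf_le_cdf hy.1) h⟩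

lemma quantile_strictMonoOn (hc : Continuous (cdf' μ)) : StrictMonoOn (quantile μ) (Ioo 0 1) := by
  rw [cdf'_eq_cdf] at hc
  intro y₁ hy₁ y₂ hy₂ hlt
  have hle : cdf μ (quantile μ y₁) ≤ y₁ :=
    le_of_tendsto (hc.continuousAt.tendsto.mono_left (nhdsWithin_le_nhds (s := Iio _)))
      (eventually_nhdsWithin_of_forall fun x hx =>
        (not_le.1 ((quantile_le_iff hy₁).not.1 (not_le.2 hx))).le)
  exact not_le.1 fun h => ((quantile_le_iff hy₂).1 h).not_gt (hle.trans_lt hlt)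

lemma quantile_eq_of_leftLim_cdf_lt {x : ℝ} (hy : y ∈ Ioo 0 1)
    (hleft : Function.leftLim (cdf μ) x < y) (hright : y ≤ cdf μ x) : quantile μ y = x := by
  refine le_antisymm ((quantile_le_iff hy).2 hright) (not_lt.1 fun hlt => ?_)
  have := (le_cdf_quantile hy).trans ((cdf μ).mono.le_leftLim hlt)
  linarith

lemma continuous_cdf'_of_strictMonoOn_quantile (h : StrictMonoOn (quantile μ) (Ioo 0 1)) :
    Continuous (cdf' μ) := by
  rw [cdf'_eq_cdf, continuous_iff_continuousAt]
  intro x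
  rw [(cdf μ).mono.continuousAt_iff_leftLim_eq_rightLim, (cdf μ).rightLim_eq]
  refine le_antisymm ((cdf μ).mono.leftLim_le le_rfl) (not_lt.1 fun hjump => ?_)
  set a := Function.leftLim (cdf μ) x
  set b := cdf μ x
  have ha : 0 ≤ a := (cdf_nonneg μ (x - 1)).trans ((cdf μ).mono.le_leftLim (by linarith))
  have hb : b ≤ 1 := cdf_le_one μ x
  have hsub : Ioo a b ⊆ Ioo 0 1 := fun y hy => ⟨ha.trans_lt hy.1, hy.2.trans_le hb⟩
  have hconst : ∀ y ∈ Ioo a b, quantile μ y = x := fun y hy =>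
    quantile_eq_of_leftLim_cdf_lt (hsub hy) hy.1 hy.2.le
  have hy₁ : (2 * a + b) / 3 ∈ Ioo a b := ⟨by linarith, by linarith⟩
  have hy₂ : (a + 2 * b) / 3 ∈ Ioo a b := ⟨by linarith, by linarith⟩
  have := h (hsub hy₁) (hsub hy₂) (by linarith : (2 * a + b) / 3 < (a + 2 * b) / 3)
  rw [hconst _ hy₁, hconst _ hy₂] at this
  exact lt_irrefl x this

end Quantile

lemma measureReal_sq_le_sq_lt {μ : Measure ℝ} (hm : ∫⁻ t, ENNReal.ofReal (t ^ 2) ∂μ ≠ ⊤) {c x : ℝ}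
    (h : (∫⁻ t, ENNReal.ofReal (t ^ 2) ∂μ).toReal < c * x ^ 2) :
    μ.real {t | x ^ 2 ≤ t ^ 2} < c := by
  set m := ∫⁻ t, ENNReal.ofReal (t ^ 2) ∂μ
  have hx : 0 < x ^ 2 := by
    refine (sq_nonneg x).lt_of_ne fun hx => ?_
    rw [← hx, mul_zero] at h
    exact ENNReal.toReal_nonneg.not_gt h
  have hset : {t | ENNReal.ofReal (x ^ 2) ≤ ENNReal.ofReal (t ^ 2)} = {t | x ^ 2 ≤ t ^ 2} := by
    ext t
    exact ENNReal.ofReal_le_ofReal_iff (sq_nonneg t)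
  have hmarkov := mul_meas_ge_le_lintegral₀ (f := fun t => ENNReal.ofReal (t ^ 2)) (μ := μ)
    (by fun_prop) (ENNReal.ofReal (x ^ 2))
  rw [hset] at hmarkov
  have hreal : x ^ 2 * μ.real {t | x ^ 2 ≤ t ^ 2} ≤ m.toReal := by
    simpa [measureReal_def, ENNReal.toReal_mul, hx.le] using ENNReal.toReal_mono hm hmarkov
  nlinarith

lemma abs_quantile_le {μ : Measure ℝ} [IsProbabilityMeasure μ] {y : ℝ} (hy : y ∈ Ioo 0 1)
    (hm : ∫⁻ t, ENNReal.ofReal (t ^ 2) ∂μ ≠ ⊤) :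
    |quantile μ y| ≤ (∫⁻ t, ENNReal.ofReal (t ^ 2) ∂μ).toReal / min y (1 - y) + 1 := by
  set m := (∫⁻ t, ENNReal.ofReal (t ^ 2) ∂μ).toReal
  set c := min y (1 - y)
  set R := m / c + 1
  have hc : 0 < c := lt_min hy.1 (by linarith [hy.2])
  have hR : 1 ≤ R := le_add_of_nonneg_left (div_nonneg ENNReal.toReal_nonneg hc.le)
  have hmR : m < c * R ^ 2 := by
    have : m / c < R ^ 2 := by nlinarith
    rwa [div_lt_iff₀' hc] at this
  -- Chebyshev: the tails beyond `±R` carry mass `< min y (1 - y)`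
  have htail := measureReal_sq_le_sq_lt hm hmR
  rw [abs_le]
  constructor
  · refine (not_le.1 fun hle => ?_).le
    have hleft : y ≤ μ.real (Iic (-R)) := by rw [← cdf_eq_real]; exact (quantile_le_iff hy).1 hle
    have hsub : Iic (-R) ⊆ {t | R ^ 2 ≤ t ^ 2} := fun t ht => by
      show R ^ 2 ≤ t ^ 2; nlinarith [mem_Iic.1 ht]
    linarith [measureReal_mono hsub (μ := μ), min_le_left y (1 - y)]
  · rw [quantile_le_iff hy, cdf_eq_real, ← compl_Ioi, probReal_compl_eq_one_sub measurableSet_Ioi]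
    have hsub : Ioi R ⊆ {t | R ^ 2 ≤ t ^ 2} := fun t ht => by
      show R ^ 2 ≤ t ^ 2; nlinarith [mem_Ioi.1 ht]
    linarith [measureReal_mono hsub (μ := μ), min_le_right y (1 - y)]

lemma integral_lt_integral_of_ae_lt {T : Type*} [MeasurableSpace T] {P : Measure T} [NeZero P]
    {f g : T → ℝ} (hf : Integrable f P) (hg : Integrable g P) (hlt : ∀ᵐ t ∂P, f t < g t) :
    ∫ t, f t ∂P < ∫ t, g t ∂P := by
  have hle : f ≤ᵐ[P] g := hlt.mono fun t ht => ht.le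
  refine (integral_mono_ae hf hg hle).lt_of_ne fun heq => ?_
  have hfg := (integral_eq_iff_of_ae_le hf hg hle).1 heq
  obtain ⟨t, ht, hteq⟩ := (hlt.and hfg).exists
  exact ht.ne hteq

section Kernel

variable {T : Type*} [MeasurableSpace T] (κ : Kernel T ℝ) [IsMarkovKernel κ] {y : ℝ}

lemma measurable_quantile_kernel (hy : y ∈ Ioo 0 1) : Measurable fun t => quantile (κ t) y := by
  refine measurable_of_Iic fun x => ?_
  have hpre : (fun t => quantile (κ t) y) ⁻¹' Iic x = {t | ENNReal.ofReal y ≤ κ t (Iic x)} := by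
    ext t
    rw [mem_preimage, mem_Iic, quantile_le_iff hy, cdf_eq_real, measureReal_def, mem_ofPred_eq,
      ENNReal.ofReal_le_iff_le_toReal (measure_ne_top _ _)]
  rw [hpre]
  exact measurableSet_le measurable_const (κ.measurable_coe measurableSet_Iic)

lemma integrable_quantile_kernel {P : Measure T} [IsFiniteMeasure P] (hy : y ∈ Ioo 0 1)
    (hmom : ∫⁻ t, ∫⁻ x, ENNReal.ofReal (x ^ 2) ∂(κ t) ∂P ≠ ⊤) :
    Integrable (fun t => quantile (κ t) y) P := by
  have hmeas : Measurable fun t => ∫⁻ x, ENNReal.ofReal (x ^ 2) ∂(κ t) :=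
    Measurable.lintegral_kernel (by fun_prop)
  have hbound : Integrable
      (fun t => (∫⁻ x, ENNReal.ofReal (x ^ 2) ∂(κ t)).toReal / min y (1 - y) + 1) P :=
    ((integrable_toReal_of_lintegral_ne_top hmeas.aemeasurable hmom).div_const _).add
      (integrable_const 1)
  refine hbound.mono' (measurable_quantile_kernel κ hy).aestronglyMeasurable ?_
  filter_upwards [ae_lt_top hmeas hmom] with t ht
  exact abs_quantile_le hy ht.ne

end Kernel

/-- If the random cdf `F_{κ_t}` is continuous for `P`-almost every `t`, then the cdf
of the Fréchet mean `ν*` (characterized by `F_{ν*}⁻(y) = ∫ F_{κ_t}⁻(y) dP(t)` on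
`(0,1)`) is continuous. -/
theorem frechet_mean_cdf_continuous
    {T : Type*} [MeasurableSpace T] (P : Measure T) (hP : IsProbabilityMeasure P)
    (κ : ProbabilityTheory.Kernel T ℝ) (hκ : ProbabilityTheory.IsMarkovKernel κ)
    (hmom : ∫⁻ t, ∫⁻ x, ENNReal.ofReal (x ^ 2) ∂(κ t) ∂P < ⊤)
    (νs : Measure ℝ) (hνs : MemW2 νs)
    (hq : ∀ y ∈ Set.Ioo (0 : ℝ) 1, quantile νs y = ∫ t, quantile (κ t) y ∂P)
    (hcont : ∀ᵐ t ∂P, Continuous (cdf' (κ t))) :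
    Continuous (cdf' νs) := by
  have := hνs.1
  have hmean : StrictMonoOn (fun y => ∫ t, quantile (κ t) y ∂P) (Ioo 0 1) :=
    fun y₁ hy₁ y₂ hy₂ hlt => integral_lt_integral_of_ae_lt
      (integrable_quantile_kernel κ hy₁ hmom.ne) (integrable_quantile_kernel κ hy₂ hmom.ne)
      (hcont.mono fun t ht => quantile_strictMonoOn ht hy₁ hy₂ hlt)
  exact continuous_cdf'_of_strictMonoOn_quantile (hmean.congr fun y hy => (hq y hy).symm)
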